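/- arXiv:2004.11656 — 3 statements merged into one kernel-verified Lean document; each statement's English description precedes it below -/
import Mathlib

section
/- Let (Ω, 𝓕, P) be a probability space, let ξ, ξ′ : Ω → ℝ be measurable functions such that exp(ξ) and exp(2ξ′) are integrable, let α > 0, and let A ∈ 𝓕. Then ∫_A e^{ξ} dP ≥ e^{−α} ∫_A e^{ξ′} dP − P(|ξ − ξ′| > α)^{1/2} · (∫_Ω e^{2ξ′} dP)^{1/2}. -/
/-!
Off the bad set `B = {|ξ - ξ'| > α}` one has `e^ξ ≥ e^{-α} e^{ξ'}` pointwise, so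
`∫_A e^ξ ≥ e^{-α} ∫_{A \ B} e^{ξ'} ≥ e^{-α} ∫_A e^{ξ'} - ∫_B e^{ξ'}`, and Cauchy–Schwarz bounds
`∫_B e^{ξ'} = ∫ 1_B e^{ξ'}` by `P(B)^{1/2} (∫ e^{2ξ'})^{1/2}`.
-/

open MeasureTheory Real

section

variable {Ω : Type*} [MeasurableSpace Ω] {μ : Measure Ω}

lemma setIntegral_le_sqrt_measure_mul_sqrt_integral_sq {f : Ω → ℝ} {s : Set Ω} (hs : μ s ≠ ⊤)
    (hf_nonneg : 0 ≤ᵐ[μ] f) (hf : MemLp f 2 μ) :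
    ∫ x in s, f x ∂μ ≤ √(μ s).toReal * √(∫ x, f x ^ 2 ∂μ) := by
  have : IsFiniteMeasure (μ.restrict s) := isFiniteMeasure_restrict.2 hs
  have holder := integral_mul_le_Lp_mul_Lq_of_nonneg (μ := μ.restrict s) HolderConjugate.two_two
    (ae_of_all _ fun _ => zero_le_one) (ae_restrict_of_ae hf_nonneg) (memLp_const 1)
    (by simpa using hf.restrict s)
  simp only [rpow_two, one_pow, one_mul, integral_const, ← sqrt_eq_rpow, smul_eq_mul, mul_one,
    measureReal_def, Measure.restrict_apply_univ] at holder
  refine holder.trans (mul_le_mul_of_nonneg_left (sqrt_le_sqrt ?_) (sqrt_nonneg _))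
  exact setIntegral_le_integral hf.integrable_sq (ae_of_all _ fun _ => sq_nonneg _)

lemma memLp_two_exp {ξ : Ω → ℝ} (hξ : Measurable ξ) (h : Integrable (fun ω => exp (2 * ξ ω)) μ) :
    MemLp (fun ω => exp (ξ ω)) 2 μ := by
  refine (memLp_two_iff_integrable_sq hξ.exp.aestronglyMeasurable).2 ?_
  simpa [← exp_nat_mul] using h

lemma exp_neg_mul_exp_le_exp_of_abs_sub_le {x y α : ℝ} (h : |x - y| ≤ α) :
    exp (-α) * exp y ≤ exp x := by
  rw [← exp_add, exp_le_exp]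
  linarith [(abs_le.1 h).1]

lemma exp_neg_mul_integral_exp_sub_setIntegral_le_integral_exp {ξ ξ' : Ω → ℝ}
    (hξ : Measurable ξ) (hξ' : Measurable ξ')
    (hint : Integrable (fun ω => exp (ξ ω)) μ) (hint' : Integrable (fun ω => exp (ξ' ω)) μ)
    {α : ℝ} (hα : 0 ≤ α) :
    exp (-α) * ∫ ω, exp (ξ' ω) ∂μ - ∫ ω in {ω | |ξ ω - ξ' ω| > α}, exp (ξ' ω) ∂μ ≤
      ∫ ω, exp (ξ ω) ∂μ := by
  set B : Set Ω := {ω | |ξ ω - ξ' ω| > α}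
  have hB : MeasurableSet B := measurableSet_lt measurable_const (hξ.sub hξ').abs
  have good : exp (-α) * ∫ ω in Bᶜ, exp (ξ' ω) ∂μ ≤ ∫ ω in Bᶜ, exp (ξ ω) ∂μ := by
    rw [← integral_const_mul]
    exact setIntegral_mono_on (hint'.const_mul _).integrableOn hint.integrableOn hB.compl
      fun ω hω => exp_neg_mul_exp_le_exp_of_abs_sub_le (not_lt.1 hω)
  have add_compl := integral_add_compl hB hint'
  have drop : ∫ ω in Bᶜ, exp (ξ ω) ∂μ ≤ ∫ ω, exp (ξ ω) ∂μ :=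
    setIntegral_le_integral hint (ae_of_all _ fun _ => (exp_pos _).le)
  have shrink : exp (-α) * ∫ ω in B, exp (ξ' ω) ∂μ ≤ ∫ ω in B, exp (ξ' ω) ∂μ :=
    mul_le_of_le_one_left (integral_nonneg fun _ => (exp_pos _).le) (exp_le_one_iff.2 (by linarith))
  calc exp (-α) * ∫ ω, exp (ξ' ω) ∂μ - ∫ ω in B, exp (ξ' ω) ∂μ
      ≤ exp (-α) * ∫ ω in Bᶜ, exp (ξ' ω) ∂μ := by rw [← add_compl, mul_add]; linarith
    _ ≤ ∫ ω, exp (ξ ω) ∂μ := good.trans drop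

end

theorem exp_tilt_comparison_lower_general
    {Ω : Type*} [MeasurableSpace Ω] (P : Measure Ω) [IsProbabilityMeasure P]
    (ξ ξ' : Ω → ℝ) (hξ : Measurable ξ) (hξ' : Measurable ξ')
    (hint : Integrable (fun ω => Real.exp (ξ ω)) P)
    (hint' : Integrable (fun ω => Real.exp (2 * ξ' ω)) P)
    (α : ℝ) (hα : 0 < α) (A : Set Ω) :
    (∫ ω in A, Real.exp (ξ ω) ∂P) ≥
      Real.exp (-α) * (∫ ω in A, Real.exp (ξ' ω) ∂P) -
        Real.sqrt (P {ω | |ξ ω - ξ' ω| > α}).toReal *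
          Real.sqrt (∫ ω, Real.exp (2 * ξ' ω) ∂P) := by
  have hL2 := memLp_two_exp hξ' hint'
  have tilt := exp_neg_mul_integral_exp_sub_setIntegral_le_integral_exp (μ := P.restrict A)
    hξ hξ' hint.restrict (hL2.integrable one_le_two).restrict hα.le
  have bad : ∫ ω in {ω | |ξ ω - ξ' ω| > α}, exp (ξ' ω) ∂P.restrict A ≤
      √(P {ω | |ξ ω - ξ' ω| > α}).toReal * √(∫ ω, exp (2 * ξ' ω) ∂P) := by
    refine (integral_mono_measure (Measure.restrict_mono subset_rfl Measure.restrict_le_self)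
      (ae_of_all _ fun _ => (exp_pos _).le) (hL2.integrable one_le_two).restrict).trans ?_
    simpa [← exp_nat_mul] using setIntegral_le_sqrt_measure_mul_sqrt_integral_sq
      (measure_ne_top P _) (ae_of_all _ fun _ => (exp_pos _).le) hL2
  linarith

/-- **Exponential comparison inequality (lower bound form).**
If `exp ξ` and `exp (2 ξ')` are integrable and `α > 0`, then for every event `A`,
`∫_A e^ξ dP ≥ e^{-α} ∫_A e^{ξ'} dP - P(|ξ - ξ'| > α)^{1/2} (∫ e^{2ξ'} dP)^{1/2}`. -/
theorem exp_tilt_comparison_lower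
    {Ω : Type*} [MeasurableSpace Ω] (P : Measure Ω) [IsProbabilityMeasure P]
    (ξ ξ' : Ω → ℝ) (hξ : Measurable ξ) (hξ' : Measurable ξ')
    (hint : Integrable (fun ω => Real.exp (ξ ω)) P)
    (hint' : Integrable (fun ω => Real.exp (2 * ξ' ω)) P)
    (α : ℝ) (hα : 0 < α) (A : Set Ω) (hA : MeasurableSet A) :
    (∫ ω in A, Real.exp (ξ ω) ∂P) ≥
      Real.exp (-α) * (∫ ω in A, Real.exp (ξ' ω) ∂P) -
        Real.sqrt (P {ω | |ξ ω - ξ' ω| > α}).toReal *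
          Real.sqrt (∫ ω, Real.exp (2 * ξ' ω) ∂P) :=
  exp_tilt_comparison_lower_general P ξ ξ' hξ hξ' hint hint' α hα A
end

section
/- Let (Ω, 𝓕, P) be a probability space, let ξ, ξ′ : Ω → ℝ be measurable functions such that exp(2ξ) and exp(ξ′) are integrable, let α > 0, and let A ∈ 𝓕. Then ∫_A e^{ξ} dP ≤ e^{α} ∫_A e^{ξ′} dP + P(|ξ − ξ′| > α)^{1/2} · (∫_Ω e^{2ξ} dP)^{1/2}. -/
/-!
With `B = {|ξ - ξ'| > α}` one has the pointwise bound `e^ξ ≤ e^α e^ξ' + 1_B e^ξ` everywhere on `Ω`.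
Integrating it over `A` and enlarging the second integral to `∫_B e^ξ`, Cauchy–Schwarz bounds the
latter by `P(B)^{1/2} (∫ e^{2ξ})^{1/2}`.
-/

open MeasureTheory

theorem setIntegral_le_sqrt_measureReal_mul_sqrt_integral_sq {α : Type*} [MeasurableSpace α]
    {μ : Measure α} {f : α → ℝ} {s : Set α} (hμs : μ s ≠ ⊤) (hf : MemLp f 2 μ)
    (hf_nonneg : 0 ≤ᵐ[μ] f) :
    ∫ x in s, f x ∂μ ≤ √(μ.real s) * √(∫ x, f x ^ 2 ∂μ) := by
  have : IsFiniteMeasure (μ.restrict s) := isFiniteMeasure_restrict.2 hμs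
  have holder := integral_mul_le_Lp_mul_Lq_of_nonneg (μ := μ.restrict s)
    Real.HolderConjugate.two_two (f := fun _ => (1 : ℝ)) (g := f) (ae_of_all _ fun _ => zero_le_one)
    (ae_restrict_of_ae hf_nonneg) (by simpa using memLp_const 1) (by simpa using hf.restrict s)
  simp only [one_mul, one_pow, mul_one, Real.rpow_two, setIntegral_const, smul_eq_mul,
    ← Real.sqrt_eq_rpow] at holder
  refine holder.trans (mul_le_mul_of_nonneg_left (Real.sqrt_le_sqrt ?_) (Real.sqrt_nonneg _))
  exact setIntegral_le_integral ((memLp_two_iff_integrable_sq hf.1).1 hf)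
    (ae_of_all _ fun _ => sq_nonneg _)

theorem exp_le_exp_mul_exp_add_indicator {Ω : Type*} (ξ ξ' : Ω → ℝ) (α : ℝ) (ω : Ω) :
    Real.exp (ξ ω) ≤ Real.exp α * Real.exp (ξ' ω) +
      {ω | |ξ ω - ξ' ω| > α}.indicator (fun ω => Real.exp (ξ ω)) ω := by
  by_cases hω : ω ∈ {ω | |ξ ω - ξ' ω| > α}
  · rw [Set.indicator_of_mem hω]
    linarith [mul_pos (Real.exp_pos α) (Real.exp_pos (ξ' ω))]
  · have hle : ξ ω ≤ α + ξ' ω := by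
      linarith [le_abs_self (ξ ω - ξ' ω), (not_lt.1 hω : |ξ ω - ξ' ω| ≤ α)]
    rw [Set.indicator_of_notMem hω, add_zero, ← Real.exp_add]
    exact Real.exp_le_exp.2 hle

theorem exp_tilt_comparison_upper_general
    {Ω : Type*} [MeasurableSpace Ω] (P : Measure Ω) [IsProbabilityMeasure P]
    (ξ ξ' : Ω → ℝ) (hξ : Measurable ξ) (hξ' : Measurable ξ')
    (hint : Integrable (fun ω => Real.exp (2 * ξ ω)) P)
    (hint' : Integrable (fun ω => Real.exp (ξ' ω)) P)
    (α : ℝ) (A : Set Ω) :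
    (∫ ω in A, Real.exp (ξ ω) ∂P) ≤
      Real.exp α * (∫ ω in A, Real.exp (ξ' ω) ∂P) +
        Real.sqrt (P {ω | |ξ ω - ξ' ω| > α}).toReal *
          Real.sqrt (∫ ω, Real.exp (2 * ξ ω) ∂P) := by
  set B : Set Ω := {ω | |ξ ω - ξ' ω| > α}
  have hB : MeasurableSet B := measurableSet_lt measurable_const (hξ.sub hξ').abs
  have hexp_sq : ∀ ω, Real.exp (ξ ω) ^ 2 = Real.exp (2 * ξ ω) := fun ω => by
    rw [sq, ← Real.exp_add, two_mul]
  have hexp : MemLp (fun ω => Real.exp (ξ ω)) 2 P :=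
    (memLp_two_iff_integrable_sq hξ.exp.aestronglyMeasurable).2 (by simpa only [hexp_sq])
  have hexp_nonneg : 0 ≤ᵐ[P] fun ω => Real.exp (ξ ω) := ae_of_all _ fun _ => (Real.exp_pos _).le
  have hexp_indicator : Integrable (B.indicator fun ω => Real.exp (ξ ω)) P :=
    (hexp.integrable one_le_two).indicator hB
  calc ∫ ω in A, Real.exp (ξ ω) ∂P
      ≤ ∫ ω in A, Real.exp α * Real.exp (ξ' ω) + B.indicator (fun ω => Real.exp (ξ ω)) ω ∂P :=
        integral_mono_of_nonneg (ae_restrict_of_ae hexp_nonneg)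
          ((hint'.const_mul _).add hexp_indicator).integrableOn
          (ae_of_all _ (exp_le_exp_mul_exp_add_indicator ξ ξ' α))
    _ = Real.exp α * (∫ ω in A, Real.exp (ξ' ω) ∂P) +
          ∫ ω in A, B.indicator (fun ω => Real.exp (ξ ω)) ω ∂P := by
        rw [integral_add (hint'.const_mul _).integrableOn hexp_indicator.integrableOn,
          integral_const_mul]
    _ ≤ Real.exp α * (∫ ω in A, Real.exp (ξ' ω) ∂P) + ∫ ω in B, Real.exp (ξ ω) ∂P := by
        rw [← integral_indicator hB]
        exact add_le_add_right (setIntegral_le_integral hexp_indicator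
          (hexp_nonneg.mono fun _ h => Set.indicator_nonneg (fun _ _ => h) _)) _
    _ ≤ _ := by
        refine add_le_add_right ?_ _
        simpa only [hexp_sq, measureReal_def] using
          setIntegral_le_sqrt_measureReal_mul_sqrt_integral_sq (measure_ne_top P B) hexp hexp_nonneg

/-- **Exponential comparison inequality (upper bound form).**
If `exp (2 ξ)` and `exp ξ'` are integrable and `α > 0`, then for every event `A`,
`∫_A e^ξ dP ≤ e^{α} ∫_A e^{ξ'} dP + P(|ξ - ξ'| > α)^{1/2} (∫ e^{2ξ} dP)^{1/2}`. -/
theorem exp_tilt_comparison_upper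
    {Ω : Type*} [MeasurableSpace Ω] (P : Measure Ω) [IsProbabilityMeasure P]
    (ξ ξ' : Ω → ℝ) (hξ : Measurable ξ) (hξ' : Measurable ξ')
    (hint : Integrable (fun ω => Real.exp (2 * ξ ω)) P)
    (hint' : Integrable (fun ω => Real.exp (ξ' ω)) P)
    (α : ℝ) (hα : 0 < α) (A : Set Ω) (hA : MeasurableSet A) :
    (∫ ω in A, Real.exp (ξ ω) ∂P) ≤
      Real.exp α * (∫ ω in A, Real.exp (ξ' ω) ∂P) +
        Real.sqrt (P {ω | |ξ ω - ξ' ω| > α}).toReal *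
          Real.sqrt (∫ ω, Real.exp (2 * ξ ω) ∂P) :=
  exp_tilt_comparison_upper_general P ξ ξ' hξ hξ' hint hint' α A
end

section
/- Let H be a separable real Hilbert space, let K ⊆ H be a compact set, and let f : H → H be continuous. Then for every ε > 0 there exists a map g : H → H which is Lipschitz continuous and bounded, with sup_{x ∈ H} ‖g(x)‖ ≤ sup_{x ∈ K} ‖f(x)‖ + ε, and which satisfies ‖g(x) − f(x)‖ ≤ ε for every x ∈ K. -/
/-!
By uniform continuity, `f` oscillates by less than `ε` on `δ`-close points of `K`. Cover `K` by
finitely many balls `ball cᵢ (δ / 2)` and put Lipschitz tents `ψᵢ` on them, supported in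
`ball cᵢ δ` and `≥ 1` on `ball cᵢ (δ / 2)`. Dividing by `max 1 (∑ ψⱼ)` rather than by `∑ ψⱼ` keeps
the weights `wᵢ` Lipschitz on all of `H` while still `∑ wᵢ ≤ 1` everywhere and `∑ wᵢ = 1` on `K`.
Then `g = ∑ wᵢ • f cᵢ` is Lipschitz, bounded by `sup_K ‖f‖`, and on `K` it is a convex combination
of values within `ε` of `f x`.
-/

open Metric Finset NNReal

theorem LipschitzWith.finset_sum {ι α E : Type*} [PseudoEMetricSpace α] [SeminormedAddCommGroup E]
    {t : Finset ι} {f : ι → α → E} {K : ι → ℝ≥0} (h : ∀ i ∈ t, LipschitzWith (K i) (f i)) :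
    LipschitzWith (∑ i ∈ t, K i) fun x => ∑ i ∈ t, f i x := by
  classical
  induction t using Finset.induction_on with
  | empty => simpa using LipschitzWith.const (0 : E)
  | insert a s ha ih =>
    simp only [Finset.sum_insert ha]
    exact (h a (mem_insert_self a s)).add (ih fun i hi => h i (mem_insert_of_mem hi))

theorem LipschitzWith.smul_of_nnnorm_le {α 𝕜 E : Type*} [PseudoMetricSpace α] [SeminormedRing 𝕜]
    [SeminormedAddCommGroup E] [Module 𝕜 E] [IsBoundedSMul 𝕜 E] {φ : α → 𝕜} {v : α → E}
    {Kφ Kv A B : ℝ≥0} (hφ : LipschitzWith Kφ φ) (hv : LipschitzWith Kv v)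
    (hφA : ∀ x, ‖φ x‖₊ ≤ A) (hvB : ∀ x, ‖v x‖₊ ≤ B) :
    LipschitzWith (A * Kv + B * Kφ) fun x => φ x • v x := by
  refine lipschitzWith_iff_dist_le_mul.2 fun x y => ?_
  have hsplit : φ x • v x - φ y • v y = φ x • (v x - v y) + (φ x - φ y) • v y := by
    rw [smul_sub, sub_smul]; abel
  rw [dist_eq_norm, hsplit]
  calc ‖φ x • (v x - v y) + (φ x - φ y) • v y‖
      ≤ ‖φ x‖ * ‖v x - v y‖ + ‖φ x - φ y‖ * ‖v y‖ :=
        (norm_add_le _ _).trans (add_le_add (norm_smul_le _ _) (norm_smul_le _ _))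
    _ ≤ A * (Kv * dist x y) + (Kφ * dist x y) * B := by
        rw [← dist_eq_norm, ← dist_eq_norm]
        gcongr
        exacts [hφA x, hv.dist_le_mul x y, hφ.dist_le_mul x y, hvB y]
    _ = (A * Kv + B * Kφ : ℝ≥0) * dist x y := by push_cast; ring

theorem lipschitzWith_inv_max_one : LipschitzWith 1 fun t : ℝ => (max 1 t)⁻¹ := by
  refine lipschitzWith_iff_dist_le_mul.2 fun s t => ?_
  have hs : 1 ≤ max 1 s := le_max_left 1 s
  have ht : 1 ≤ max 1 t := le_max_left 1 t
  have hst : 0 < max 1 s * max 1 t := by positivity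
  calc dist (max 1 s)⁻¹ (max 1 t)⁻¹ = dist (max 1 s) (max 1 t) / (max 1 s * max 1 t) := by
        rw [Real.dist_eq, Real.dist_eq, inv_sub_inv (by positivity) (by positivity), abs_div,
          abs_of_pos hst, abs_sub_comm]
    _ ≤ dist (max 1 s) (max 1 t) := div_le_self dist_nonneg (one_le_mul_of_one_le_of_one_le hs ht)
    _ ≤ 1 * dist s t := (LipschitzWith.id.const_max 1).dist_le_mul s t

section ConvexCombination

variable {ι E : Type*} [SeminormedAddCommGroup E] [NormedSpace ℝ E] {t : Finset ι} {w : ι → ℝ}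
  {v : ι → E}

theorem norm_sum_smul_le_sum_mul {M : ℝ} (hw : ∀ i ∈ t, 0 ≤ w i)
    (hv : ∀ i ∈ t, w i ≠ 0 → ‖v i‖ ≤ M) : ‖∑ i ∈ t, w i • v i‖ ≤ (∑ i ∈ t, w i) * M := by
  rw [Finset.sum_mul]
  refine (norm_sum_le _ _).trans (sum_le_sum fun i hi => ?_)
  rw [norm_smul, Real.norm_of_nonneg (hw i hi)]
  rcases eq_or_ne (w i) 0 with hwi | hwi
  · simp [hwi]
  · exact mul_le_mul_of_nonneg_left (hv i hi hwi) (hw i hi)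

theorem norm_sum_smul_sub_le_of_sum_eq_one {y : E} {ε : ℝ} (hw : ∀ i ∈ t, 0 ≤ w i)
    (hw1 : ∑ i ∈ t, w i = 1) (hv : ∀ i ∈ t, w i ≠ 0 → ‖v i - y‖ ≤ ε) :
    ‖∑ i ∈ t, w i • v i - y‖ ≤ ε := by
  have hsub : ∑ i ∈ t, w i • v i - y = ∑ i ∈ t, w i • (v i - y) := by
    simp only [smul_sub, sum_sub_distrib, ← sum_smul, hw1, one_smul]
  simpa [hsub, hw1] using norm_sum_smul_le_sum_mul hw hv

end ConvexCombination

section TentPartition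

variable {X : Type*} [PseudoMetricSpace X]

/-- Height 2, so that `tent r c ≥ 1` on `ball c r`; it vanishes outside `ball c (2 * r)`. -/
noncomputable def tent (r : ℝ) (c x : X) : ℝ := max 0 (2 - dist x c / r)

theorem tent_nonneg (r : ℝ) (c x : X) : 0 ≤ tent r c x := le_max_left _ _

theorem tent_le_two {r : ℝ} (hr : 0 ≤ r) (c x : X) : tent r c x ≤ 2 :=
  max_le zero_le_two (sub_le_self _ (by positivity))

theorem one_le_tent {r : ℝ} {c x : X} (h : dist x c < r) : 1 ≤ tent r c x := by
  have hr : 0 < r := dist_nonneg.trans_lt h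
  refine le_max_of_le_right ?_
  have : dist x c / r ≤ 1 := (div_le_one hr).2 h.le
  linarith

theorem dist_lt_of_tent_ne_zero {r : ℝ} (hr : 0 < r) {c x : X} (h : tent r c x ≠ 0) :
    dist x c < 2 * r := by
  by_contra! hle
  refine h (max_eq_left ?_)
  have : 2 ≤ dist x c / r := (le_div_iff₀ hr).2 (by linarith)
  linarith

theorem lipschitzWith_tent (r : ℝ) (c : X) : LipschitzWith (|r|⁻¹).toNNReal (tent r c) := by
  refine LipschitzWith.const_max (lipschitzWith_iff_dist_le_mul.2 fun x y => ?_) 0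
  rw [Real.coe_toNNReal _ (by positivity), Real.dist_eq, sub_sub_sub_cancel_left, div_sub_div_same,
    abs_div, div_eq_inv_mul, abs_sub_comm]
  exact mul_le_mul_of_nonneg_left (abs_dist_sub_le x y c) (by positivity)

noncomputable def tentPartition (t : Finset X) (r : ℝ) (i x : X) : ℝ :=
  tent r i x / max 1 (∑ j ∈ t, tent r j x)

variable (t : Finset X) {r : ℝ}

theorem tentPartition_nonneg (i x : X) : 0 ≤ tentPartition t r i x :=
  div_nonneg (tent_nonneg r i x) (zero_le_one.trans (le_max_left _ _))

theorem dist_lt_of_tentPartition_ne_zero (hr : 0 < r) {i x : X} (h : tentPartition t r i x ≠ 0) :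
    dist x i < 2 * r :=
  dist_lt_of_tent_ne_zero hr (left_ne_zero_of_mul h)

theorem sum_tentPartition_le_one (x : X) : ∑ i ∈ t, tentPartition t r i x ≤ 1 := by
  simp only [tentPartition]
  rw [← Finset.sum_div]
  exact div_le_one_of_le₀ (le_max_right _ _) (zero_le_one.trans (le_max_left _ _))

theorem sum_tentPartition_eq_one {x : X} (hx : ∃ i ∈ t, dist x i < r) :
    ∑ i ∈ t, tentPartition t r i x = 1 := by
  obtain ⟨i, hit, hxi⟩ := hx
  have hsum : 1 ≤ ∑ j ∈ t, tent r j x :=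
    (one_le_tent hxi).trans (single_le_sum (fun j _ => tent_nonneg r j x) hit)
  simp only [tentPartition]
  rw [← Finset.sum_div, max_eq_right hsum, div_self (by positivity)]

theorem lipschitzWith_tentPartition (hr : 0 ≤ r) (i : X) :
    ∃ K, LipschitzWith K (tentPartition t r i) := by
  have hsum := LipschitzWith.finset_sum fun j (_ : j ∈ t) => lipschitzWith_tent r j
  refine ⟨_, (lipschitzWith_tent r i).smul_of_nnnorm_le (lipschitzWith_inv_max_one.comp hsum)
    (A := 2) (B := 1) (fun x => ?_) (fun x => ?_)⟩
  · rw [← NNReal.coe_le_coe, coe_nnnorm, Real.norm_of_nonneg (tent_nonneg r i x)]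
    exact tent_le_two hr i x
  · rw [← NNReal.coe_le_coe, coe_nnnorm, NNReal.coe_one, norm_inv,
      Real.norm_of_nonneg (zero_le_one.trans (le_max_left _ _))]
    exact inv_le_one_of_one_le₀ (le_max_left _ _)

end TentPartition

theorem lipschitz_approx_on_compact_general
    {H : Type*} [NormedAddCommGroup H] [InnerProductSpace ℝ H]
    (K : Set H) (hK : IsCompact K) (f : H → H) (hf : Continuous f) :
    ∀ ε > (0 : ℝ), ∃ g : H → H,
      (∃ L : NNReal, LipschitzWith L g) ∧
      (∀ x : H, ‖g x‖ ≤ sSup ((fun x => ‖f x‖) '' K) + ε) ∧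
      (∀ x ∈ K, ‖g x - f x‖ ≤ ε) := by
  intro ε hε
  obtain ⟨δ, hδ, hfδ⟩ := Metric.uniformContinuousOn_iff.1
    (hK.uniformContinuousOn_of_continuous hf.continuousOn) ε hε
  obtain ⟨t, htK, hKt⟩ := hK.elim_nhds_subcover (fun x => ball x (δ / 2))
    fun x _ => ball_mem_nhds x (half_pos hδ)
  set M := sSup ((fun x => ‖f x‖) '' K)
  have hfM : ∀ x ∈ K, ‖f x‖ ≤ M := fun x hx =>
    le_csSup (hK.image (continuous_norm.comp hf)).bddAbove ⟨x, hx, rfl⟩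
  have hM : 0 ≤ M := Real.sSup_nonneg (by rintro _ ⟨x, -, rfl⟩; exact norm_nonneg _)
  set w := tentPartition t (δ / 2)
  have hw : ∀ x, ∀ i ∈ t, 0 ≤ w i x := fun x i _ => tentPartition_nonneg t i x
  choose L hL using lipschitzWith_tentPartition t (half_pos hδ).le
  refine ⟨fun x => ∑ i ∈ t, w i x • f i, ⟨_, LipschitzWith.finset_sum fun i _ =>
    (ContinuousLinearMap.toSpanSingleton ℝ (f i)).lipschitz.comp (hL i)⟩, fun x => ?_,
    fun x hx => ?_⟩
  · calc ‖∑ i ∈ t, w i x • f i‖ ≤ (∑ i ∈ t, w i x) * M :=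
          norm_sum_smul_le_sum_mul (hw x) fun i hi _ => hfM i (htK i hi)
      _ ≤ M := mul_le_of_le_one_left hM (sum_tentPartition_le_one t x)
      _ ≤ M + ε := le_add_of_nonneg_right hε.le
  · refine norm_sum_smul_sub_le_of_sum_eq_one (hw x)
      (sum_tentPartition_eq_one t (by simpa using hKt hx)) fun i hi hwi => ?_
    have hxi : dist x i < δ := by linarith [dist_lt_of_tentPartition_ne_zero t (half_pos hδ) hwi]
    rw [← dist_eq_norm, dist_comm]
    exact (hfδ x hx i (htK i hi) hxi).le

/-- **Uniform approximation on compacts by bounded Lipschitz maps.**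
Every continuous `f : H → H` on a separable real Hilbert space can be approximated,
uniformly on a compact set `K` and to within `ε`, by a globally Lipschitz map `g`
whose uniform bound on `H` exceeds `sup_{x ∈ K} ‖f x‖` by at most `ε`. -/
theorem lipschitz_approx_on_compact
    {H : Type*} [NormedAddCommGroup H] [InnerProductSpace ℝ H] [CompleteSpace H]
    [TopologicalSpace.SeparableSpace H]
    (K : Set H) (hK : IsCompact K) (f : H → H) (hf : Continuous f) :
    ∀ ε > (0 : ℝ), ∃ g : H → H,
      (∃ L : NNReal, LipschitzWith L g) ∧
      (∀ x : H, ‖g x‖ ≤ sSup ((fun x => ‖f x‖) '' K) + ε) ∧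
      (∀ x ∈ K, ‖g x - f x‖ ≤ ε) :=
  lipschitz_approx_on_compact_general K hK f hf
end
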